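/- arXiv:2410.01725 — 5 statements merged into one kernel-verified Lean document; each statement's English description precedes it below -/
import Mathlib

section
/- Let H_1, H_2, H_3 be closed subspaces of a Hilbert space H with H_2 ⊆ H_1 ∩ H_3. Then H_1 ∩ H_2^⊥ is orthogonal to H_3 ∩ H_2^⊥ if and only if p_{H_1} ∘ p_{H_3} = p_{H_2}. Moreover, if this holds, then H_2 = H_1 ∩ H_3. -/
open scoped ComplexInnerProductSpace

/-!
Write `(U, V, W)` for `(H₂, H₁, H₃)`, so `U ≤ V ⊓ W`, and `P_K` for the orthogonal projection
onto `K`. Both conditions are equivalent to `W ⊓ Uᗮ ⊥ V`. For orthogonality this is because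
`V = U ⊕ (V ⊓ Uᗮ)` and `W ⊓ Uᗮ` is already orthogonal to `U`. For the projections,
`P_W x = P_U x + w` with `w ∈ W ⊓ Uᗮ`, and `P_V` fixes `P_U x`, so `P_V P_W = P_U` exactly when
`P_V` kills every such `w`. Finally, if `P_V P_W = P_U` then every `x ∈ V ⊓ W` satisfies
`x = P_V P_W x = P_U x ∈ U`.
-/

namespace Submodule

variable {𝕜 E : Type*} [RCLike 𝕜] [NormedAddCommGroup E] [InnerProductSpace 𝕜 E]
  {U V W : Submodule 𝕜 E}

theorem starProjection_sub_starProjection_mem_inf_orthogonal [U.HasOrthogonalProjection]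
    [V.HasOrthogonalProjection] (hUV : U ≤ V) (x : E) :
    V.starProjection x - U.starProjection x ∈ V ⊓ Uᗮ := by
  refine ⟨sub_mem (V.starProjection_apply_mem x) (hUV (U.starProjection_apply_mem x)), ?_⟩
  have hsub : V.starProjection x - U.starProjection x =
      (x - U.starProjection x) - (x - V.starProjection x) := by abel
  rw [hsub]
  exact sub_mem (U.sub_starProjection_mem_orthogonal x)
    (orthogonal_le hUV (V.sub_starProjection_mem_orthogonal x))

theorem isOrtho_inf_orthogonal_iff_le_orthogonal [U.HasOrthogonalProjection] (hUV : U ≤ V) :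
    V ⊓ Uᗮ ⟂ W ⊓ Uᗮ ↔ W ⊓ Uᗮ ≤ Vᗮ := by
  rw [isOrtho_comm, isOrtho_iff_le]
  constructor
  · intro h
    rw [← sup_orthogonal_inf_of_hasOrthogonalProjection hUV, ← inf_orthogonal, inf_comm Uᗮ V]
    exact le_inf inf_le_right h
  · exact fun h => h.trans (orthogonal_le inf_le_left)

variable [U.HasOrthogonalProjection] [V.HasOrthogonalProjection] [W.HasOrthogonalProjection]

theorem starProjection_comp_eq_iff_inf_orthogonal_le (hU : U ≤ V ⊓ W) :
    (∀ x, V.starProjection (W.starProjection x) = U.starProjection x) ↔ W ⊓ Uᗮ ≤ Vᗮ := by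
  constructor
  · intro h y hy
    rw [← starProjection_apply_eq_zero_iff, ← starProjection_eq_self_iff.mpr hy.1, h,
      starProjection_apply_eq_zero_iff]
    exact hy.2
  · intro h x
    have hw := starProjection_sub_starProjection_mem_inf_orthogonal (le_inf_iff.mp hU).2 x
    rw [← add_sub_cancel (U.starProjection x) (W.starProjection x), map_add,
      starProjection_eq_self_iff.mpr ((le_inf_iff.mp hU).1 (U.starProjection_apply_mem x)),
      (starProjection_apply_eq_zero_iff V).mpr (h hw), add_zero]

theorem eq_inf_of_starProjection_comp_eq (hU : U ≤ V ⊓ W)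
    (h : ∀ x, V.starProjection (W.starProjection x) = U.starProjection x) : U = V ⊓ W := by
  refine le_antisymm hU fun x hx => ?_
  rw [← starProjection_eq_self_iff.mpr hx.1, ← starProjection_eq_self_iff.mpr hx.2, h]
  exact U.starProjection_apply_mem x

end Submodule

theorem stmt_1_general {H : Type*} [NormedAddCommGroup H] [InnerProductSpace ℂ H]
    (H₁ H₂ H₃ : Submodule ℂ H)
    [CompleteSpace H₁] [CompleteSpace H₂] [CompleteSpace H₃]
    (hle : H₂ ≤ H₁ ⊓ H₃) :
    ((∀ x ∈ H₁ ⊓ H₂ᗮ, ∀ y ∈ H₃ ⊓ H₂ᗮ, ⟪x, y⟫ = 0) ↔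
      (∀ ξ : H, (H₁.orthogonalProjectionOnto ((H₃.orthogonalProjectionOnto ξ : H)) : H)
        = (H₂.orthogonalProjectionOnto ξ : H))) ∧
    ((∀ ξ : H, (H₁.orthogonalProjectionOnto ((H₃.orthogonalProjectionOnto ξ : H)) : H)
        = (H₂.orthogonalProjectionOnto ξ : H)) → H₂ = H₁ ⊓ H₃) := by
  simp only [Submodule.coe_orthogonalProjectionOnto_apply]
  refine ⟨?_, Submodule.eq_inf_of_starProjection_comp_eq hle⟩
  rw [← Submodule.isOrtho_iff_inner_eq,
    Submodule.isOrtho_inf_orthogonal_iff_le_orthogonal (le_inf_iff.mp hle).1,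
    Submodule.starProjection_comp_eq_iff_inf_orthogonal_le hle]

/-- Characterization of conditional orthogonality: for closed subspaces
`H₁, H₂, H₃` of a Hilbert space with `H₂ ⊆ H₁ ∩ H₃`, the subspaces
`H₁ ∩ H₂^⊥` and `H₃ ∩ H₂^⊥` are orthogonal if and only if
`p_{H₁} ∘ p_{H₃} = p_{H₂}`; moreover, in that case `H₂ = H₁ ∩ H₃`. -/
theorem stmt_1 {H : Type*} [NormedAddCommGroup H] [InnerProductSpace ℂ H] [CompleteSpace H]
    (H₁ H₂ H₃ : Submodule ℂ H)
    (h₁ : IsClosed (H₁ : Set H)) (h₂ : IsClosed (H₂ : Set H)) (h₃ : IsClosed (H₃ : Set H))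
    [CompleteSpace H₁] [CompleteSpace H₂] [CompleteSpace H₃]
    (hle : H₂ ≤ H₁ ⊓ H₃) :
    ((∀ x ∈ H₁ ⊓ H₂ᗮ, ∀ y ∈ H₃ ⊓ H₂ᗮ, ⟪x, y⟫ = 0) ↔
      (∀ ξ : H, (H₁.orthogonalProjectionOnto ((H₃.orthogonalProjectionOnto ξ : H)) : H)
        = (H₂.orthogonalProjectionOnto ξ : H))) ∧
    ((∀ ξ : H, (H₁.orthogonalProjectionOnto ((H₃.orthogonalProjectionOnto ξ : H)) : H)
        = (H₂.orthogonalProjectionOnto ξ : H)) → H₂ = H₁ ⊓ H₃) :=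
  stmt_1_general H₁ H₂ H₃ hle
end

section
/- Let H be a Hilbert space and G a subgroup of the unitary group U(H). For every ξ ∈ H, the orthogonal projection of ξ onto the subspace of G-invariant vectors equals the unique vector of minimal norm in the closed convex hull of the orbit G·ξ. In particular, this projection lies in the closed linear span of G·ξ. -/
open scoped ComplexInnerProductSpace

variable {H : Type*} [NormedAddCommGroup H] [InnerProductSpace ℂ H]

/-- The closed subspace of vectors invariant under every element of a subgroup `G`
of the unitary group of `H`. -/
def invariantVectors (G : Subgroup (H ≃ₗᵢ[ℂ] H)) : Submodule ℂ H where
  carrier := {ξ : H | ∀ T ∈ G, T ξ = ξ}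
  zero_mem' := by intro T _; exact map_zero T
  add_mem' := by
    intro x y hx hy T hT
    rw [map_add, hx T hT, hy T hT]
  smul_mem' := by
    intro c x hx T hT
    rw [map_smul, hx T hT]

/-! The projection `P` onto `invariantVectors G` is constant on the closed convex hull `K` of the
orbit `G • ξ`, because `T ξ - ξ` is orthogonal to every invariant vector; hence Pythagoras gives
`‖y‖ ^ 2 = ‖P ξ‖ ^ 2 + ‖y - P ξ‖ ^ 2` for `y ∈ K`, which is minimality and uniqueness. It remains
to see `P ξ ∈ K`. The vector `m` of minimal norm in `K` is unique by strict convexity, and `G`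
preserves both `K` and the norm, so `m` is invariant; thus `m = P m = P ξ`. -/

open Set

section MinimalNorm

variable {F : Type*} [NormedAddCommGroup F]

theorem exists_mem_forall_norm_le_of_isClosed_convex [InnerProductSpace ℝ F] [CompleteSpace F]
    {K : Set F} (hne : K.Nonempty) (hclosed : IsClosed K) (hconv : Convex ℝ K) :
    ∃ m ∈ K, ∀ y ∈ K, ‖m‖ ≤ ‖y‖ := by
  obtain ⟨m, hmK, hm⟩ := exists_norm_eq_iInf_of_complete_convex hne hclosed.isComplete hconv 0
  refine ⟨m, hmK, fun y hy => ?_⟩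
  have hbdd : BddBelow (range fun w : K => ‖(0 : F) - w‖) :=
    ⟨0, by rintro _ ⟨w, rfl⟩; positivity⟩
  simpa using hm.trans_le (ciInf_le hbdd ⟨y, hy⟩)

theorem eq_of_norm_eq_of_forall_norm_le [NormedSpace ℝ F] [StrictConvexSpace ℝ F] {K : Set F}
    (hconv : Convex ℝ K) {x y : F} (hx : x ∈ K) (hy : y ∈ K) (hmin : ∀ z ∈ K, ‖x‖ ≤ ‖z‖)
    (hxy : ‖y‖ = ‖x‖) : y = x := by
  by_contra hne
  have hmid : (1 / 2 : ℝ) • (x + y) ∈ K := by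
    simpa only [smul_add] using hconv hx hy (by norm_num) (by norm_num) (by norm_num)
  exact ((norm_midpoint_lt_iff hxy.symm).mpr (Ne.symm hne)).not_ge (hmin _ hmid)

end MinimalNorm

section ClosedConvexHull

variable {E : Type*} [AddCommGroup E] [Module ℝ E] [TopologicalSpace E]

theorem Set.MapsTo.closure_convexHull [IsTopologicalAddGroup E] [ContinuousSMul ℝ E]
    {s : Set E} {f : E →ₗ[ℝ] E} (hf : Continuous f) (h : MapsTo f s s) :
    MapsTo f (closure (convexHull ℝ s)) (closure (convexHull ℝ s)) :=
  MapsTo.closure (convexHull_min (h.mono_right (subset_convexHull ℝ s))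
    ((convex_convexHull ℝ s).linear_preimage f)) hf

theorem LinearMap.eq_of_mem_closure_convexHull {F : Type*} [AddCommGroup F] [Module ℝ F]
    [TopologicalSpace F] [T1Space F] {f : E →ₗ[ℝ] F} (hf : Continuous f) {s : Set E} {c : F}
    (h : ∀ x ∈ s, f x = c) {y : E} (hy : y ∈ closure (convexHull ℝ s)) : f y = c :=
  closure_minimal (convexHull_min h ((convex_singleton c).linear_preimage f))
    (isClosed_singleton.preimage hf) hy

theorem closure_convexHull_subset_closure_span {𝕜 : Type*} [Semiring 𝕜] [Module 𝕜 E]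
    [SMul ℝ 𝕜] [IsScalarTower ℝ 𝕜 E] (s : Set E) :
    closure (convexHull ℝ s) ⊆ closure (Submodule.span 𝕜 s : Set E) :=
  closure_mono <|
    convexHull_min Submodule.subset_span ((Submodule.span 𝕜 s).restrictScalars ℝ).convex

end ClosedConvexHull

def orbitClosedConvexHull (G : Subgroup (H ≃ₗᵢ[ℂ] H)) (ξ : H) : Set H :=
  closure (convexHull ℝ (range fun T : G => (T : H ≃ₗᵢ[ℂ] H) ξ))

namespace invariantVectors

variable {G : Subgroup (H ≃ₗᵢ[ℂ] H)}

theorem mapsTo_orbitClosedConvexHull {T : H ≃ₗᵢ[ℂ] H} (hT : T ∈ G) (ξ : H) :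
    MapsTo T (orbitClosedConvexHull G ξ) (orbitClosedConvexHull G ξ) := by
  refine MapsTo.closure_convexHull (f := T.toLinearEquiv.toLinearMap.restrictScalars ℝ)
    T.continuous ?_
  rintro _ ⟨S, rfl⟩
  exact ⟨⟨T, hT⟩ * S, rfl⟩

variable [(invariantVectors G).HasOrthogonalProjection]

theorem starProjection_map {T : H ≃ₗᵢ[ℂ] H} (hT : T ∈ G) (x : H) :
    (invariantVectors G).starProjection (T x) = (invariantVectors G).starProjection x := by
  rw [← sub_eq_zero, ← map_sub, Submodule.starProjection_apply_eq_zero_iff,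
    Submodule.mem_orthogonal]
  intro v hv
  rw [inner_sub_right, ← hv T hT, LinearIsometryEquiv.inner_map_map, hv T hT, sub_self]

theorem starProjection_eq_of_mem_orbitClosedConvexHull {ξ y : H}
    (hy : y ∈ orbitClosedConvexHull G ξ) :
    (invariantVectors G).starProjection y = (invariantVectors G).starProjection ξ := by
  refine LinearMap.eq_of_mem_closure_convexHull
    (f := ((invariantVectors G).starProjection : H →ₗ[ℂ] H).restrictScalars ℝ)
    (ContinuousLinearMap.continuous _) ?_ hy
  rintro _ ⟨T, rfl⟩
  exact starProjection_map T.2 ξ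

theorem norm_sq_eq_of_mem_orbitClosedConvexHull {ξ y : H} (hy : y ∈ orbitClosedConvexHull G ξ) :
    ‖y‖ ^ 2 = ‖(invariantVectors G).starProjection ξ‖ ^ 2 +
      ‖y - (invariantVectors G).starProjection ξ‖ ^ 2 := by
  rw [← starProjection_eq_of_mem_orbitClosedConvexHull hy, sq, sq, sq,
    ← norm_add_sq_eq_norm_sq_add_norm_sq_of_inner_eq_zero (𝕜 := ℂ), add_sub_cancel]
  exact (Submodule.mem_orthogonal _ _).mp (Submodule.sub_starProjection_mem_orthogonal y) _
    (Submodule.starProjection_apply_mem _ y)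

theorem starProjection_mem_orbitClosedConvexHull [CompleteSpace H] (ξ : H) :
    (invariantVectors G).starProjection ξ ∈ orbitClosedConvexHull G ξ := by
  let : InnerProductSpace ℝ H := InnerProductSpace.complexToReal
  have hconv : Convex ℝ (orbitClosedConvexHull G ξ) := (convex_convexHull ℝ _).closure
  have hξ : ξ ∈ orbitClosedConvexHull G ξ := subset_closure (subset_convexHull ℝ _ ⟨1, rfl⟩)
  obtain ⟨m, hm, hmin⟩ :=
    exists_mem_forall_norm_le_of_isClosed_convex ⟨ξ, hξ⟩ isClosed_closure hconv
  have hm_inv : m ∈ invariantVectors G := fun T hT =>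
    eq_of_norm_eq_of_forall_norm_le hconv hm (mapsTo_orbitClosedConvexHull hT ξ hm) hmin
      (T.norm_map m)
  rwa [← starProjection_eq_of_mem_orbitClosedConvexHull hm,
    Submodule.starProjection_eq_self_iff.mpr hm_inv]

end invariantVectors

/-- **Alaoglu–Birkhoff.** For a subgroup `G` of the unitary group of a Hilbert space `H`
and `ξ ∈ H`, the orthogonal projection of `ξ` onto the subspace of `G`-invariant vectors
is the unique vector of minimal norm in the closed convex hull of the orbit `G·ξ`;
in particular it lies in the closed linear span of the orbit. -/
theorem stmt_2 [CompleteSpace H] (G : Subgroup (H ≃ₗᵢ[ℂ] H))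
    [CompleteSpace ↥(invariantVectors G)] (ξ : H) :
    (Submodule.orthogonalProjectionOnto (invariantVectors G) ξ : H) ∈
        closure (convexHull ℝ (Set.range fun T : G => (T : H ≃ₗᵢ[ℂ] H) ξ)) ∧
    (∀ y ∈ closure (convexHull ℝ (Set.range fun T : G => (T : H ≃ₗᵢ[ℂ] H) ξ)),
        ‖(Submodule.orthogonalProjectionOnto (invariantVectors G) ξ : H)‖ ≤ ‖y‖) ∧
    (∀ y ∈ closure (convexHull ℝ (Set.range fun T : G => (T : H ≃ₗᵢ[ℂ] H) ξ)),
        ‖y‖ = ‖(Submodule.orthogonalProjectionOnto (invariantVectors G) ξ : H)‖ →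
          y = (Submodule.orthogonalProjectionOnto (invariantVectors G) ξ : H)) ∧
    (Submodule.orthogonalProjectionOnto (invariantVectors G) ξ : H) ∈
        closure ((Submodule.span ℂ (Set.range fun T : G => (T : H ≃ₗᵢ[ℂ] H) ξ) : Submodule ℂ H) :
          Set H) := by
  simp only [Submodule.coe_orthogonalProjectionOnto_apply]
  have hmem := invariantVectors.starProjection_mem_orbitClosedConvexHull (G := G) ξ
  refine ⟨hmem, fun y hy => ?_, fun y hy hnorm => ?_,
    closure_convexHull_subset_closure_span _ hmem⟩
  · have hpyth := invariantVectors.norm_sq_eq_of_mem_orbitClosedConvexHull hy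
    refine (pow_le_pow_iff_left₀ (norm_nonneg _) (norm_nonneg _) two_ne_zero).mp ?_
    rw [hpyth]
    exact le_add_of_nonneg_right (sq_nonneg _)
  · have hpyth := invariantVectors.norm_sq_eq_of_mem_orbitClosedConvexHull hy
    rw [hnorm, left_eq_add, pow_eq_zero_iff two_ne_zero, norm_eq_zero, sub_eq_zero] at hpyth
    exact hpyth
end

section
/- The closed convex hull of the orbit G·ξ of a vector ξ under a subgroup G of the unitary group of a Hilbert space contains exactly one G-invariant vector. -/
set_option maxHeartbeats 1000000

open scoped InnerProductSpace

/-- The closed convex hull of the orbit `G·ξ` of a vector `ξ` under a subgroup `G` of the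
unitary group of a Hilbert space contains exactly one `G`-invariant vector. -/
theorem stmt_3 {H : Type*} [NormedAddCommGroup H] [InnerProductSpace ℂ H] [CompleteSpace H]
    (G : Subgroup (H ≃ₗᵢ[ℂ] H)) (ξ : H) :
    ∃! η : H,
      η ∈ closure (convexHull ℝ (Set.range fun T : G => (T : H ≃ₗᵢ[ℂ] H) ξ)) ∧
        ∀ T ∈ G, T η = η := by
  letI : InnerProductSpace ℝ H := InnerProductSpace.rclikeToReal ℂ H
  set S : Set H := Set.range (fun T : G => (T : H ≃ₗᵢ[ℂ] H) ξ) with hS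
  set K : Set H := closure (convexHull ℝ S) with hKdef
  have hK_conv : Convex ℝ K := (convex_convexHull ℝ S).closure
  have hξS : ξ ∈ S := ⟨(⟨1, G.one_mem⟩ : G), by simp⟩
  have hK_ne : K.Nonempty := ⟨ξ, subset_closure (subset_convexHull ℝ S hξS)⟩
  have hK_complete : IsComplete K := isClosed_closure.isComplete
  -- `K` is invariant under every element of `G`
  have hmaps : ∀ T : H ≃ₗᵢ[ℂ] H, T ∈ G → ∀ x ∈ K, T x ∈ K := by
    intro T hT x hx
    have hTS : T '' S ⊆ S := by
      rintro _ ⟨_, ⟨U, rfl⟩, rfl⟩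
      exact ⟨⟨T * (U : H ≃ₗᵢ[ℂ] H), G.mul_mem hT U.2⟩, rfl⟩
    have hlin : IsLinearMap ℝ (T : H → H) :=
      ⟨fun a b => T.map_add a b, fun c a => T.toLinearIsometry.toLinearMap.map_smul_of_tower c a⟩
    have h1 : T x ∈ closure (T '' convexHull ℝ S) :=
      image_closure_subset_closure_image T.continuous ⟨x, hx, rfl⟩
    have h2 : T '' convexHull ℝ S = convexHull ℝ (T '' S) := hlin.image_convexHull S
    refine closure_mono ?_ (h2 ▸ h1)
    exact convexHull_min (hTS.trans (subset_convexHull ℝ S)) (convex_convexHull ℝ S)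
  -- any two minimizers of the norm over `K` coincide
  have key : ∀ η ∈ K, ∀ τ ∈ K, (‖(0:H) - η‖ = ⨅ w : K, ‖(0:H) - w‖) →
      (‖(0:H) - τ‖ = ⨅ w : K, ‖(0:H) - w‖) → τ = η := by
    intro η hηK τ hτK hmin hmin'
    have c1 := (norm_eq_iInf_iff_real_inner_le_zero hK_conv hηK).1 hmin τ hτK
    have c2 := (norm_eq_iInf_iff_real_inner_le_zero hK_conv hτK).1 hmin' η hηK
    rw [zero_sub] at c1 c2
    have hsq : ‖τ - η‖ ^ 2 ≤ 0 := by
      have hadd := add_nonpos c1 c2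
      rw [inner_neg_left, inner_neg_left] at hadd
      have e : ⟪τ - η, τ - η⟫_ℝ = ‖τ - η‖ ^ 2 := real_inner_self_eq_norm_sq _
      simp only [inner_sub_left, inner_sub_right] at e hadd ⊢
      have h3 : ⟪η, τ - η⟫_ℝ + ⟪τ, η - τ⟫_ℝ = -‖τ - η‖ ^ 2 := by
        simp only [inner_sub_right]; linarith [e]
      simp only [inner_sub_right] at h3
      linarith [hadd, h3]
    have : τ - η = 0 := by
      have h0 : ‖τ - η‖ = 0 := by nlinarith [norm_nonneg (τ - η)]
      exact norm_eq_zero.1 h0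
    exact sub_eq_zero.1 this
  -- existence of a norm minimizer in `K`, and its `G`-invariance
  obtain ⟨η, hηK, hmin⟩ := exists_norm_eq_iInf_of_complete_convex hK_ne hK_complete hK_conv 0
  have hinv : ∀ T : H ≃ₗᵢ[ℂ] H, T ∈ G → T η = η := by
    intro T hT
    have hTηK : T η ∈ K := hmaps T hT η hηK
    have hmin' : ‖(0 : H) - T η‖ = ⨅ w : K, ‖(0 : H) - w‖ := by
      rw [zero_sub, norm_neg, T.norm_map, ← norm_neg, ← zero_sub]
      exact hmin
    exact key η hηK (T η) hTηK hmin hmin'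
  -- for a `G`-invariant vector `η`, the inner product `⟪η, ·⟫` is constant on `K`
  have hconst : ∀ η : H, (∀ T : H ≃ₗᵢ[ℂ] H, T ∈ G → T η = η) →
      ∀ x ∈ K, ⟪η, x⟫_ℂ = ⟪η, ξ⟫_ℂ := by
    intro η hη x hx
    set f : H →ₗ[ℝ] ℂ := ((innerSL ℂ η).toLinearMap.restrictScalars ℝ) with hf
    have hfS : S ⊆ f ⁻¹' {⟪η, ξ⟫_ℂ} := by
      rintro _ ⟨U, rfl⟩
      have : ⟪(U : H ≃ₗᵢ[ℂ] H) η, (U : H ≃ₗᵢ[ℂ] H) ξ⟫_ℂ = ⟪η, ξ⟫_ℂ :=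
        (U : H ≃ₗᵢ[ℂ] H).inner_map_map η ξ
      simp only [Set.mem_preimage, Set.mem_singleton_iff, hf]
      rw [← this, hη U U.2]
      rfl
    have hconv : Convex ℝ (f ⁻¹' {⟪η, ξ⟫_ℂ}) := (convex_singleton _).linear_preimage f
    have hcl : IsClosed (f ⁻¹' {⟪η, ξ⟫_ℂ}) :=
      isClosed_singleton.preimage (innerSL ℂ η).continuous
    have := closure_minimal (convexHull_min hfS hconv) hcl hx
    simpa [hf] using this
  refine ⟨η, ⟨hηK, hinv⟩, ?_⟩
  rintro η' ⟨hη'K, hη'inv⟩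
  have h1 : ⟪η', η⟫_ℂ = ⟪η', η'⟫_ℂ :=
    (hconst η' hη'inv η hηK).trans (hconst η' hη'inv η' hη'K).symm
  have h2 : ⟪η, η'⟫_ℂ = ⟪η, η⟫_ℂ :=
    (hconst η hinv η' hη'K).trans (hconst η hinv η hηK).symm
  have h0 : ⟪η' - η, η' - η⟫_ℂ = 0 := by
    rw [inner_sub_left, inner_sub_right, inner_sub_right, h1, h2]
    ring
  exact sub_eq_zero.1 (inner_self_eq_zero.1 h0)
end

section
/- Let G ≤ Sym(Ω) be a closed permutation group with an approximating sequence G_0 ↪ G_1 ↪ … ↪ G. For every finite A ⊆ Ω and N such that A ⊆ Ω_N, the sequence of subgroups (ι_n(G_n)_A)_{n ≥ N} is increasing and its union is dense in the pointwise stabilizer G_A. -/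
open scoped ComplexInnerProductSpace

/-- The topology of pointwise convergence on the permutation group of a set `S`
(viewed as a discrete space): the topology induced by `g ↦ (g, g⁻¹) ∈ (S → S) × (S → S)`. -/
instance permTopology (S : Type*) : TopologicalSpace (Equiv.Perm S) :=
  letI : TopologicalSpace S := ⊥
  TopologicalSpace.induced
    (fun g : Equiv.Perm S => ((g : S → S), (g.symm : S → S))) inferInstance

/-- The pointwise stabilizer `G_A` of a set `A ⊆ Ω` in a permutation group `G ≤ Sym(Ω)`. -/
def pstab {Ω : Type*} (G : Subgroup (Equiv.Perm Ω)) (A : Set Ω) : Subgroup G where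
  carrier := {g : G | ∀ a ∈ A, (g : Equiv.Perm Ω) a = a}
  one_mem' := by intro a _; rfl
  mul_mem' := by
    intro g h hg hh a ha
    simp only [Subgroup.coe_mul, Equiv.Perm.mul_apply]
    rw [hh a ha, hg a ha]
  inv_mem' := by
    intro g hg a ha
    have := hg a ha
    simp only [Subgroup.coe_inv]
    exact_mod_cast (Equiv.symm_apply_eq _).2 this.symm

lemma perm_mem_nhds_aux {S : Type*} (p : Equiv.Perm S) (s : Set (Equiv.Perm S))
    (hs : s ∈ nhds p) :
    ∃ T : Finset S,
      {q : Equiv.Perm S | (∀ x ∈ T, q x = p x) ∧ ∀ x ∈ T, q.symm x = p.symm x} ⊆ s := by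
  classical
  letI : TopologicalSpace S := ⊥
  haveI : DiscreteTopology S := ⟨rfl⟩
  have hind : Topology.IsInducing (fun g : Equiv.Perm S => ((g : S → S), (g.symm : S → S))) := ⟨rfl⟩
  rw [hind.nhds_eq_comap _, Filter.mem_comap] at hs
  obtain ⟨t, ht, hts⟩ := hs
  rw [nhds_prod_eq, Filter.mem_prod_iff] at ht
  obtain ⟨u, hu, v, hv, huv⟩ := ht
  rw [nhds_pi, Filter.mem_pi] at hu hv
  obtain ⟨I1, hI1, t1, ht1, ht1u⟩ := hu
  obtain ⟨I2, hI2, t2, ht2, ht2v⟩ := hv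
  refine ⟨hI1.toFinset ∪ hI2.toFinset, ?_⟩
  rintro q ⟨hq1, hq2⟩
  apply hts
  apply huv
  constructor
  · apply ht1u
    intro x hx
    have hqx := hq1 x (by simp [hx])
    have := ht1 x
    rw [nhds_discrete, Filter.mem_pure] at this
    simpa [hqx] using this
  · apply ht2v
    intro x hx
    have hqx := hq2 x (by simp [hx])
    have := ht2 x
    rw [nhds_discrete, Filter.mem_pure] at this
    simpa [hqx] using this

lemma perm_nhds_basic_aux {S : Type*} (p : Equiv.Perm S) (T : Finset S) :
    {q : Equiv.Perm S | (∀ x ∈ T, q x = p x) ∧ ∀ x ∈ T, q.symm x = p.symm x} ∈ nhds p := by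
  letI : TopologicalSpace S := ⊥
  haveI : DiscreteTopology S := ⟨rfl⟩
  have hind : Topology.IsInducing (fun g : Equiv.Perm S => ((g : S → S), (g.symm : S → S))) := ⟨rfl⟩
  rw [hind.nhds_eq_comap _]
  have hu : (Set.pi (↑T) fun x => {(p : S → S) x}) ∈ nhds (p : S → S) := by
    rw [nhds_pi]
    exact Filter.pi_mem_pi T.finite_toSet (fun i _ => by
      rw [nhds_discrete, Filter.mem_pure]; exact rfl)
  have hv : (Set.pi (↑T) fun x => {(p.symm : S → S) x}) ∈ nhds (p.symm : S → S) := by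
    rw [nhds_pi]
    exact Filter.pi_mem_pi T.finite_toSet (fun i _ => by
      rw [nhds_discrete, Filter.mem_pure]; exact rfl)
  rw [Filter.mem_comap]
  refine ⟨(Set.pi (↑T) fun x => {(p : S → S) x}) ×ˢ
    (Set.pi (↑T) fun x => {(p.symm : S → S) x}), ?_, ?_⟩
  · rw [nhds_prod_eq]; exact Filter.prod_mem_prod hu hv
  · rintro q ⟨hq1, hq2⟩
    exact ⟨fun x hx => hq1 x hx, fun x hx => hq2 x hx⟩

/-- If `G ≤ Sym(Ω)` is a closed permutation group with an approximating sequence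
`G₀ ↪ G₁ ↪ … ↪ G`, then for every finite `A ⊆ Ω` and `N` with `A ⊆ Ω_N`, the sequence
of subgroups `(ιₙ(Gₙ)_A)_{n ≥ N}` is increasing and its union is dense in the pointwise
stabilizer `G_A`. -/
theorem stmt_16 {Ω : Type} [Countable Ω]
    (Ωs : ℕ → Set Ω) (hmono : Monotone Ωs) (hinf : ∀ n, (Ωs n).Infinite)
    (hunion : (⋃ n, Ωs n) = Set.univ)
    (Gs : (n : ℕ) → Subgroup (Equiv.Perm ↥(Ωs n)))
    (hGsclosed : ∀ n, IsClosed ((Gs n : Set (Equiv.Perm ↥(Ωs n)))))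
    (G : Subgroup (Equiv.Perm Ω)) (hGclosed : IsClosed ((G : Set (Equiv.Perm Ω))))
    (ι : (n : ℕ) → ↥(Gs n) →* Equiv.Perm Ω)
    (hιinj : ∀ n, Function.Injective (ι n))
    (hιext : ∀ (n : ℕ) (g : ↥(Gs n)) (x : ↥(Ωs n)),
      ι n g (x : Ω) = (((g : Equiv.Perm ↥(Ωs n)) x : ↥(Ωs n)) : Ω))
    (hιG : ∀ (n : ℕ) (g : ↥(Gs n)), ι n g ∈ G)
    (hιmono : ∀ (n : ℕ) (g : ↥(Gs n)),
      ι n g ∈ Set.range fun h : ↥(Gs (n + 1)) => (ι (n + 1) h : Equiv.Perm Ω))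
    (hdense : (G : Set (Equiv.Perm Ω)) ⊆
      closure (⋃ n, Set.range fun g : ↥(Gs n) => (ι n g : Equiv.Perm Ω)))
    (A : Finset Ω) (N : ℕ) (hAN : (↑A : Set Ω) ⊆ Ωs N) :
    (∀ n : ℕ, N ≤ n →
      {p : Equiv.Perm Ω | (∃ g : ↥(Gs n), ι n g = p) ∧ ∀ a ∈ A, p a = a} ⊆
        {p : Equiv.Perm Ω | (∃ g : ↥(Gs (n + 1)), ι (n + 1) g = p) ∧ ∀ a ∈ A, p a = a}) ∧
    (∀ p : Equiv.Perm Ω, p ∈ G → (∀ a ∈ A, p a = a) →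
      p ∈ closure (⋃ n : ℕ, ⋃ (_ : N ≤ n),
        {p' : Equiv.Perm Ω | (∃ g : ↥(Gs n), ι n g = p') ∧ ∀ a ∈ A, p' a = a})) := by
  classical
  have hrange : ∀ n m : ℕ, n ≤ m → ∀ q : Equiv.Perm Ω,
      (∃ g : ↥(Gs n), ι n g = q) → ∃ g : ↥(Gs m), ι m g = q := by
    intro n m hnm
    induction m, hnm using Nat.le_induction with
    | base => exact fun q h => h
    | succ m' hm ih =>
      intro q hq
      obtain ⟨g, hg⟩ := ih q hq
      obtain ⟨g', hg'⟩ := hιmono m' g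
      exact ⟨g', hg'.trans hg⟩
  constructor
  · rintro n _ p ⟨⟨g, hg⟩, hfix⟩
    obtain ⟨g', hg'⟩ := hιmono n g
    exact ⟨⟨g', hg'.trans hg⟩, hfix⟩
  · intro p hpG hpA
    rw [mem_closure_iff_nhds]
    intro s hs
    obtain ⟨T, hT⟩ := perm_mem_nhds_aux p s hs
    have hbasic := perm_nhds_basic_aux p (T ∪ A)
    have hp' := hdense hpG
    rw [mem_closure_iff_nhds] at hp'
    obtain ⟨q, hq1, hq2⟩ := hp' _ hbasic
    simp only [Set.mem_iUnion, Set.mem_range] at hq2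
    obtain ⟨n, g, hg⟩ := hq2
    obtain ⟨g', hg'⟩ := hrange n (max n N) (le_max_left _ _) q ⟨g, hg⟩
    have hqA : ∀ a ∈ A, q a = a := by
      intro a ha
      have := hq1.1 a (Finset.mem_union_right _ ha)
      rw [this, hpA a ha]
    refine ⟨q, ?_, ?_⟩
    · exact hT ⟨fun x hx => hq1.1 x (Finset.mem_union_left _ hx),
        fun x hx => hq1.2 x (Finset.mem_union_left _ hx)⟩
    · simp only [Set.mem_iUnion]
      exact ⟨max n N, le_max_right _ _, ⟨g', hg'⟩, hqA⟩
end

section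
/- Let Γ be a torsion-free countable group acting freely by isometries on a countable ultrahomogeneous metric space X (so Γ ≤ Isom(X)), and let G = Isom(X) with the topology of pointwise convergence. Suppose V ≤ G is a proper open subgroup with G_A ≤ V ≤ G_{{A}} for some nonempty finite A ⊆ X. Then the left translation action of Γ on G/V is free. -/
/-- The topology of pointwise convergence on the isometry group of a metric space `X`:
the topology induced by `g ↦ (g, g⁻¹) ∈ (X → X) × (X → X)`. -/
instance isomTopology (X : Type*) [MetricSpace X] : TopologicalSpace (X ≃ᵢ X) :=
  TopologicalSpace.induced
    (fun g : X ≃ᵢ X => ((g : X → X), (g.symm : X → X))) inferInstance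

/-- Let `Γ` be a torsion-free countable group acting freely by isometries on a countable
ultrahomogeneous metric space `X` (i.e. `Γ ≤ Isom(X)`), and let `G = Isom(X)`.
If `V ≤ G` is a proper open subgroup with `G_A ≤ V ≤ G_{{A}}` for some nonempty finite
`A ⊆ X`, then the left translation action of `Γ` on `G/V` is free. -/
theorem stmt_17 (X : Type) [MetricSpace X] [Countable X]
    (hultra : ∀ s : Set X, s.Finite → ∀ φ : s → X,
      (∀ a b : s, dist (φ a) (φ b) = dist (a : X) (b : X)) →
        ∃ ψ : X ≃ᵢ X, ∀ a : s, ψ (a : X) = φ a)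
    (Γ : Subgroup (X ≃ᵢ X)) [Countable Γ]
    (htf : ∀ γ : Γ, γ ≠ 1 → ¬IsOfFinOrder γ)
    (hfree : ∀ γ : Γ, γ ≠ 1 → ∀ x : X, (γ : X ≃ᵢ X) x ≠ x)
    (V : Subgroup (X ≃ᵢ X)) (hVopen : IsOpen ((V : Set (X ≃ᵢ X))))
    (hVproper : V ≠ ⊤)
    (A : Finset X) (hAne : A.Nonempty)
    (hGA : ∀ g : X ≃ᵢ X, (∀ a ∈ A, g a = a) → g ∈ V)
    (hGsetwise : ∀ g ∈ V, (fun a => g a) '' (↑A : Set X) = (↑A : Set X)) :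
    ∀ γ : Γ, γ ≠ 1 → ∀ q : (X ≃ᵢ X) ⧸ V, (γ : X ≃ᵢ X) • q ≠ q := by

  intro γ hγ q hq
  induction q using QuotientGroup.induction_on with
  | H g =>
  rw [MulAction.Quotient.smul_mk, QuotientGroup.eq] at hq
  set h : X ≃ᵢ X := ((γ : X ≃ᵢ X) * g)⁻¹ * g with hh
  have hmem : h ∈ V := hq
  have himg := hGsetwise h hmem
  have hmapsto : ∀ a ∈ A, h a ∈ A := by
    intro a ha
    have : h a ∈ (fun a => h a) '' (A : Set X) := ⟨a, ha, rfl⟩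
    rw [himg] at this; exact this
  let f : A → A := fun a => ⟨h a, hmapsto a a.2⟩
  have hfinj : Function.Injective f := by
    intro a b hab
    exact Subtype.ext (h.injective (congrArg Subtype.val hab))
  let e : Equiv.Perm A := Equiv.ofBijective f ((Finite.injective_iff_bijective).mp hfinj)
  have hnpos : 0 < orderOf e := orderOf_pos e
  set n := orderOf e with hn
  have hpow : ∀ k : ℕ, ∀ a : A, ((e ^ k) a : X) = (h ^ k) (a : X) := by
    intro k
    induction k with
    | zero => intro a; simp
    | succ k ih =>
      intro a
      rw [pow_succ', pow_succ']
      simp only [Equiv.Perm.mul_apply]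
      have h1 : (h * h ^ k) (a : X) = h ((h ^ k) (a : X)) := rfl
      rw [h1, ← ih a]
      rfl
  obtain ⟨a, ha⟩ := hAne
  have hfix : (h ^ n) (a : X) = a := by
    have := hpow n ⟨a, ha⟩
    rw [pow_orderOf_eq_one] at this
    simpa using this.symm
  have hconj : h ^ n = g⁻¹ * ((γ : X ≃ᵢ X)⁻¹) ^ n * g := by
    rw [hh]
    have : ((γ : X ≃ᵢ X) * g)⁻¹ * g = g⁻¹ * (γ : X ≃ᵢ X)⁻¹ * (g⁻¹)⁻¹ := by group
    rw [this, conj_pow, inv_inv]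
  have happ : ((γ : X ≃ᵢ X)⁻¹ ^ n) (g a) = g a := by
    have h2 : (g⁻¹ * ((γ : X ≃ᵢ X)⁻¹) ^ n * g) a = a := by rw [← hconj]; exact hfix
    have h3 : g⁻¹ (((γ : X ≃ᵢ X)⁻¹ ^ n) (g a)) = a := h2
    have := congrArg g h3
    simpa using this
  set γ' : Γ := γ⁻¹ ^ n with hγ'
  have hne : γ' ≠ 1 := by
    intro hone
    exact htf γ⁻¹ (inv_ne_one.mpr hγ)
      (isOfFinOrder_iff_pow_eq_one.mpr ⟨n, hnpos, hone⟩)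
  apply hfree γ' hne (g a)
  have hcoe : (γ' : X ≃ᵢ X) = (γ : X ≃ᵢ X)⁻¹ ^ n := by
    rw [hγ']; push_cast; rfl
  rw [hcoe]; exact happ
end
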